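/- Let r = 1 and suppose d ≥ 0, c ≥ 0 and Assumptions 1–2 hold. If Φ(u) = [v̲, v̄] with v̲ < v̄, then for every v in the open interval (v̲, v̄), the set Ψ(v) is the singleton {u}. -/
import Mathlib

open Matrix

/-- Assumption 1 in the case `r = 1`, with `M` a single row vector `Mv`:
the row spaces of `A`, `B` and the span of `Mv` are pairwise orthogonal
and their sum is all of `ℝⁿ`. -/
def Assumption1R {m l n : ℕ} (A : Matrix (Fin m) (Fin n) ℝ)
    (B : Matrix (Fin l) (Fin n) ℝ) (Mv : Fin n → ℝ) : Prop :=
  (∀ wa wb, (Aᵀ *ᵥ wa) ⬝ᵥ (Bᵀ *ᵥ wb) = 0) ∧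
  (∀ wa, (Aᵀ *ᵥ wa) ⬝ᵥ Mv = 0) ∧
  (∀ wb, (Bᵀ *ᵥ wb) ⬝ᵥ Mv = 0) ∧
  (LinearMap.range (Aᵀ).mulVecLin ⊔ LinearMap.range (Bᵀ).mulVecLin ⊔
      (Submodule.span ℝ {Mv}) = ⊤)

/-- Optimality for the LP `min ⟨cost, x⟩ s.t. Ax = Ad, x ≥ 0`. -/
def OptimalFor {m n : ℕ} (A : Matrix (Fin m) (Fin n) ℝ) (d cost x : Fin n → ℝ) : Prop :=
  A *ᵥ x = A *ᵥ d ∧ 0 ≤ x ∧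
    ∀ x' : Fin n → ℝ, A *ᵥ x' = A *ᵥ d → 0 ≤ x' → cost ⬝ᵥ x ≤ cost ⬝ᵥ x'

/-- The primal projection interval `Θ_P ⊆ ℝ` (case `r = 1`). -/
def ThetaPR {m n : ℕ} (A : Matrix (Fin m) (Fin n) ℝ) (Mv d : Fin n → ℝ) : Set ℝ :=
  {v | ∃ x : Fin n → ℝ, 0 ≤ x ∧ A *ᵥ x = A *ᵥ d ∧ Mv ⬝ᵥ x = Mv ⬝ᵥ d + v}

/-- The dual projection interval `Θ_D ⊆ ℝ` (case `r = 1`). -/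
def ThetaDR {l n : ℕ} (B : Matrix (Fin l) (Fin n) ℝ) (Mv c : Fin n → ℝ) : Set ℝ :=
  {u | ∃ y : Fin n → ℝ, 0 ≤ y ∧ B *ᵥ y = B *ᵥ c ∧ Mv ⬝ᵥ y = Mv ⬝ᵥ c + u}

/-- `Φ(u) ⊆ ℝ` (case `r = 1`). -/
def PhiR {m n : ℕ} (A : Matrix (Fin m) (Fin n) ℝ) (Mv c d : Fin n → ℝ) (u : ℝ) : Set ℝ :=
  {v | ∃ x : Fin n → ℝ, OptimalFor A d (c + u • Mv) x ∧ v = Mv ⬝ᵥ (x - d)}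

/-- `Ψ(v) ⊆ ℝ` (case `r = 1`). -/
def PsiR {l n : ℕ} (B : Matrix (Fin l) (Fin n) ℝ) (Mv c d : Fin n → ℝ) (v : ℝ) : Set ℝ :=
  {u | ∃ y : Fin n → ℝ, OptimalFor B c (d + v • Mv) y ∧ u = Mv ⬝ᵥ (y - c)}

/-- The set of parameters `v` for which the parametric KKT conditions (with dual
parameter `u`) admit a solution pair `(x̄, ȳ)`. -/
def KKTSet {m l n : ℕ} (A : Matrix (Fin m) (Fin n) ℝ) (B : Matrix (Fin l) (Fin n) ℝ)
    (Mv c d : Fin n → ℝ) (u : ℝ) : Set ℝ :=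
  {v | ∃ xb yb : Fin n → ℝ,
    A *ᵥ xb = A *ᵥ d ∧ Mv ⬝ᵥ xb = Mv ⬝ᵥ d + v ∧ 0 ≤ xb ∧
    B *ᵥ yb = B *ᵥ c ∧ Mv ⬝ᵥ yb = Mv ⬝ᵥ c + u ∧ 0 ≤ yb ∧
    xb ⬝ᵥ yb = 0}

namespace PsiAux

open Finset

section Cone

variable {ι : Type*} [Fintype ι] {E : Type*} [AddCommGroup E] [Module ℝ E]

/-- Conic Carathéodory: any nonnegative combination can be rewritten with
linearly independent support. -/
lemma carath (V : ι → E) (s : Finset ι) (l : ι → ℝ) (hl : 0 ≤ l)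
    (hsupp : ∀ i, l i ≠ 0 → i ∈ s) :
    ∃ l' : ι → ℝ, 0 ≤ l' ∧ ∑ i, l' i • V i = ∑ i, l i • V i ∧
      LinearIndependent ℝ (fun i : {i // l' i ≠ 0} => V i) := by
  classical
  induction s using Finset.strongInduction generalizing l with
  | _ s ih =>
  by_cases hind : LinearIndependent ℝ (fun i : {i // l i ≠ 0} => V i)
  · exact ⟨l, hl, rfl, hind⟩
  · obtain ⟨g', hg0', j0, hgj0'⟩ := Fintype.not_linearIndependent_iff.mp hind
    set g : {i // l i ≠ 0} → ℝ := if 0 < g' j0 then g' else -g' with hgdef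
    have hg0 : ∑ i, g i • V i = 0 := by
      rw [hgdef]; split
      · exact hg0'
      · have : ∑ i, (-g') i • V i = -∑ i, g' i • V i := by
          rw [← Finset.sum_neg_distrib]
          exact Finset.sum_congr rfl fun i _ => by simp
        rw [this, hg0', neg_zero]
    have hgj0 : 0 < g j0 := by
      rw [hgdef]; split
      · assumption
      · rename_i h
        simp only [Pi.neg_apply, neg_pos]
        exact lt_of_le_of_ne (not_lt.mp h) hgj0'
    set gh : ι → ℝ := fun i => if h : l i ≠ 0 then g ⟨i, h⟩ else 0 with hgh
    have hghsupp : ∀ i, gh i ≠ 0 → l i ≠ 0 := by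
      intro i hi; by_contra h; simp [hgh, h] at hi
    have hghsum : ∑ i : ι, gh i • V i = 0 := by
      have h1 : ∑ i : ι, gh i • V i = ∑ i ∈ Finset.univ.filter (fun i => l i ≠ 0),
          gh i • V i := by
        refine (Finset.sum_subset (Finset.filter_subset _ _) ?_).symm
        intro i _ hi
        simp only [Finset.mem_filter, Finset.mem_univ, true_and] at hi
        push_neg at hi
        simp [hgh, hi]
      have h2 : ∑ i ∈ Finset.univ.filter (fun i => l i ≠ 0), gh i • V i
          = ∑ i : {i // l i ≠ 0}, gh i.1 • V i.1 :=
        Finset.sum_subtype _ (fun x => by simp) _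
      rw [h1, h2, ← hg0]
      exact Finset.sum_congr rfl fun i _ => by simp [hgh, i.2]
    have hghj0 : 0 < gh j0.1 := by simpa [hgh, j0.2] using hgj0
    -- choose the ratio-minimizing index
    set T : Finset ι := Finset.univ.filter (fun i => 0 < gh i) with hT
    have hTne : T.Nonempty := ⟨j0.1, by simp [hT, hghj0]⟩
    obtain ⟨i0, hi0T, hi0min⟩ := T.exists_min_image (fun i => l i / gh i) hTne
    have hgh_i0 : 0 < gh i0 := by simpa [hT] using hi0T
    set t : ℝ := l i0 / gh i0 with ht
    have ht0 : 0 ≤ t := div_nonneg (hl i0) hgh_i0.le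
    set l' : ι → ℝ := fun i => l i - t * gh i with hl'
    have hl'0 : 0 ≤ l' := by
      intro i
      by_cases hi : 0 < gh i
      · have := hi0min i (by simp [hT, hi])
        have : t * gh i ≤ l i := by
          rw [← le_div_iff₀ hi]; exact this
        simpa [hl'] using this
      · have : t * gh i ≤ 0 := mul_nonpos_of_nonneg_of_nonpos ht0 (not_lt.mp hi)
        have := sub_nonneg.mpr (this.trans (hl i))
        simpa [hl'] using this
    have hl'sum : ∑ i, l' i • V i = ∑ i, l i • V i := by
      simp only [hl', sub_smul, mul_smul, Finset.sum_sub_distrib]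
      rw [← Finset.smul_sum, hghsum, smul_zero, sub_zero]
    have hl'supp : ∀ i, l' i ≠ 0 → i ∈ s.erase i0 := by
      intro i hi
      have hlne : l i ≠ 0 := by
        by_contra h
        rcases eq_or_ne (gh i) 0 with h2 | h2
        · simp [hl', h, h2] at hi
        · exact (hghsupp i h2) h
      have hine : i ≠ i0 := by
        intro h; subst h
        apply hi
        simp [hl', ht, div_mul_cancel₀ _ (ne_of_gt hgh_i0)]
      exact Finset.mem_erase.mpr ⟨hine, hsupp i hlne⟩
    have hi0s : i0 ∈ s := hsupp i0 (hghsupp i0 (ne_of_gt hgh_i0))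
    obtain ⟨l'', h1, h2, h3⟩ := ih (s.erase i0) (Finset.erase_ssubset hi0s) l' hl'0 hl'supp
    exact ⟨l'', h1, h2.trans hl'sum, h3⟩

end Cone

section Cone2

variable {ι : Type*} [Fintype ι] {k : ℕ}

/-- The finitely generated cone. -/
def coneOf (V : ι → (Fin k → ℝ)) : Set (Fin k → ℝ) :=
  {x | ∃ l : ι → ℝ, 0 ≤ l ∧ ∑ i, l i • V i = x}

set_option maxHeartbeats 1000000 in
lemma isClosed_coneOf (V : ι → (Fin k → ℝ)) : IsClosed (coneOf V) := by
  classical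
  have hrep : coneOf V = ⋃ S ∈ {S : Finset ι | LinearIndependent ℝ (fun i : ↥S => V i)},
      (fun m : (↥S → ℝ) => ∑ i : ↥S, m i • V i.1) '' {m | 0 ≤ m} := by
    ext x
    simp only [Set.mem_iUnion, Set.mem_image, Set.mem_setOf_eq]
    constructor
    · rintro ⟨l, hl, rfl⟩
      obtain ⟨l', hl'0, hl'sum, hl'ind⟩ := carath V Finset.univ l hl (fun i _ => Finset.mem_univ i)
      refine ⟨Finset.univ.filter (fun i => l' i ≠ 0), ?_, fun i => l' i.1,
        fun i => hl'0 i.1, ?_⟩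
      · have hcomp := hl'ind.comp
          (fun i : ↥(Finset.univ.filter (fun i => l' i ≠ 0)) =>
            (⟨i.1, by
              have h := i.2
              simp only [Finset.mem_filter, Finset.mem_univ, true_and] at h
              exact h⟩ : {j // l' j ≠ 0}))
          (fun a b hab => Subtype.ext (by simpa using congrArg Subtype.val hab))
        simpa [Function.comp_def] using hcomp
      · rw [← hl'sum, Finset.univ_eq_attach,
          Finset.sum_attach (Finset.univ.filter (fun i => l' i ≠ 0)) (fun i => l' i • V i)]
        refine Finset.sum_subset (Finset.subset_univ _) ?_
        intro i _ hi
        simp only [Finset.mem_filter, Finset.mem_univ, true_and] at hi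
        push_neg at hi
        simp [hi]
    · rintro ⟨S, _, m, hm, rfl⟩
      refine ⟨fun i => if h : i ∈ S then m ⟨i, h⟩ else 0, ?_, ?_⟩
      · intro i; by_cases h : i ∈ S <;> simp [h]; exact hm _
      · calc ∑ i : ι, (fun i => if h : i ∈ S then m ⟨i, h⟩ else 0) i • V i
            = ∑ i ∈ S, (fun i => if h : i ∈ S then m ⟨i, h⟩ else 0) i • V i := by
              refine (Finset.sum_subset (Finset.subset_univ S) ?_).symm
              intro i _ hi; simp [hi]
          _ = ∑ i ∈ S.attach, (fun i => if h : i ∈ S then m ⟨i, h⟩ else 0) i.1 • V i.1 :=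
              (Finset.sum_attach S _).symm
          _ = ∑ i : ↥S, m i • V i.1 := by
              rw [← Finset.univ_eq_attach]
              exact Finset.sum_congr rfl fun i _ => by simp
  rw [hrep]
  refine Set.Finite.isClosed_biUnion (Set.toFinite _) ?_
  rintro S hS
  let L : (↥S → ℝ) →ₗ[ℝ] (Fin k → ℝ) :=
    { toFun := fun m => ∑ i : ↥S, m i • V i.1
      map_add' := by intro a b; simp [add_smul, Finset.sum_add_distrib]
      map_smul' := by intro r a; simp [mul_smul, ← Finset.smul_sum]
    }
  have hinj : Function.Injective L := by
    intro a b hab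
    have hab' : ∑ i : ↥S, a i • V i.1 = ∑ i : ↥S, b i • V i.1 := hab
    have h0 : ∑ i : ↥S, (a - b) i • V i.1 = 0 := by
      simp only [Pi.sub_apply, sub_smul, Finset.sum_sub_distrib]
      rw [hab', sub_self]
    have h1 := Fintype.linearIndependent_iff.mp hS (a - b) h0
    funext i
    simpa [sub_eq_zero] using h1 i
  have hemb := LinearMap.isClosedEmbedding_of_injective (LinearMap.ker_eq_bot.mpr hinj)
  exact hemb.isClosedMap _ isClosed_Ici

lemma coneOf_convex (V : ι → (Fin k → ℝ)) : Convex ℝ (coneOf V) := by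
  rintro x ⟨l, hl, rfl⟩ y ⟨l', hl', rfl⟩ a b ha hb _
  refine ⟨a • l + b • l', ?_, ?_⟩
  · intro i
    have := add_nonneg (mul_nonneg ha (hl i)) (mul_nonneg hb (hl' i))
    simpa using this
  · simp only [Pi.add_apply, Pi.smul_apply, smul_eq_mul, add_smul, mul_smul,
      Finset.sum_add_distrib, ← Finset.smul_sum]

lemma coneOf_farkas (V : ι → (Fin k → ℝ)) (b : Fin k → ℝ) (hb : b ∉ coneOf V) :
    ∃ w : Fin k → ℝ, (∀ i, 0 ≤ V i ⬝ᵥ w) ∧ b ⬝ᵥ w < 0 := by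
  classical
  obtain ⟨f, u, hfs, hfb⟩ :=
    geometric_hahn_banach_closed_point (coneOf_convex V) (isClosed_coneOf V) hb
  have h0 : (0 : Fin k → ℝ) ∈ coneOf V := ⟨0, le_refl _, by simp⟩
  have hu : 0 < u := by simpa using hfs 0 h0
  have hle : ∀ x ∈ coneOf V, f x ≤ 0 := by
    intro x hx
    by_contra h
    push_neg at h
    have hmem : ∀ t : ℝ, 0 ≤ t → t • x ∈ coneOf V := by
      rintro t ht
      obtain ⟨l, hl, rfl⟩ := hx
      exact ⟨t • l, fun i => by simpa using mul_nonneg ht (hl i),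
        by simp [mul_smul, ← Finset.smul_sum]⟩
    have := hfs (((u + 1) / f x) • x) (hmem _ (div_nonneg (by linarith) h.le))
    rw [_root_.map_smul, smul_eq_mul, div_mul_cancel₀ _ h.ne'] at this
    linarith
  -- represent f as a dot product
  set w : Fin k → ℝ := fun j => -f (Pi.single j 1) with hw
  have hrep : ∀ y : Fin k → ℝ, y ⬝ᵥ w = -f y := by
    intro y
    have hy := pi_eq_sum_univ y
    calc y ⬝ᵥ w = ∑ j, y j * w j := rfl
    _ = -f y := by
      conv_rhs => rw [hy]
      rw [map_sum]
      rw [← Finset.sum_neg_distrib]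
      refine Finset.sum_congr rfl fun j _ => ?_
      have : f (y j • fun j' => if j = j' then (1:ℝ) else 0) = y j * f (Pi.single j 1) := by
        rw [_root_.map_smul]
        simp only [smul_eq_mul]
        congr 1
        congr 1
        funext j'
        simp [Pi.single_apply, eq_comm]
      rw [this, hw]
      ring
  refine ⟨w, fun i => ?_, ?_⟩
  · rw [hrep]
    have : f (V i) ≤ 0 := hle (V i) ⟨fun j => if j = i then 1 else 0,
      fun j => by dsimp; split <;> norm_num, by simp⟩
    linarith
  · rw [hrep]
    linarith [hfb, hu]

end Cone2


lemma cons_dot {m : ℕ} (a : ℝ) (g : Fin m → ℝ) (w : Fin (m+1) → ℝ) :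
    (Fin.cons a g : Fin (m+1) → ℝ) ⬝ᵥ w = a * w 0 + ∑ j, g j * w j.succ := by
  simp [dotProduct, Fin.sum_univ_succ]

/-- Existence of a complementary dual solution for an optimal LP solution. -/
lemma exists_dual_certificate {m n : ℕ} (A : Matrix (Fin m) (Fin n) ℝ)
    (d cost x : Fin n → ℝ) (hx : OptimalFor A d cost x) :
    ∃ p : Fin m → ℝ, (∀ i, (Aᵀ *ᵥ p) i ≤ cost i) ∧
      (∀ i, x i ≠ 0 → (Aᵀ *ᵥ p) i = cost i) := by
  classical
  obtain ⟨hfeas, hxpos, hopt⟩ := hx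
  set uvec : Fin n → (Fin (m+1) → ℝ) := fun i => Fin.cons (cost i) (fun j => A j i) with huvec
  set V : ((Fin n) ⊕ (Fin n)) ⊕ Unit → (Fin (m+1) → ℝ) := fun g =>
    match g with
    | .inl (.inl i) => uvec i
    | .inl (.inr i) => if x i = 0 then 0 else -uvec i
    | .inr _ => Fin.cons 1 0 with hV
  set b : Fin (m+1) → ℝ := Fin.cons (-1) 0 with hb
  by_cases hmem : b ∈ coneOf V
  · -- derive a contradiction with optimality
    exfalso
    obtain ⟨l, hl, hsum⟩ := hmem
    set h : Fin n → ℝ := fun i =>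
      l (.inl (.inl i)) - (if x i = 0 then 0 else l (.inl (.inr i))) with hh
    have hsum' : ∑ i, h i • uvec i + l (.inr ()) • (Fin.cons 1 0 : Fin (m+1) → ℝ) = b := by
      rw [← hsum, Fintype.sum_sum_type, Fintype.sum_sum_type]
      simp only [Finset.univ_unique, Finset.sum_singleton]
      have : ∀ i : Fin n, h i • uvec i =
          l (.inl (.inl i)) • V (.inl (.inl i)) + l (.inl (.inr i)) • V (.inl (.inr i)) := by
        intro i
        by_cases hxi : x i = 0 <;> simp [hV, hh, hxi, sub_smul, sub_eq_add_neg, add_smul, neg_smul]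
      rw [Finset.sum_congr rfl (fun i _ => this i), Finset.sum_add_distrib]
      try simp [hV]
    -- coordinate equations
    have hcost : cost ⬝ᵥ h + l (.inr ()) = -1 := by
      have := congrFun hsum' 0
      simpa [huvec, hb, dotProduct, Finset.sum_apply, mul_comm] using this
    have hAh : A *ᵥ h = 0 := by
      funext j
      have := congrFun hsum' j.succ
      simpa [huvec, hb, Matrix.mulVec, dotProduct, Finset.sum_apply,
        mul_comm] using this
    have hcost' : cost ⬝ᵥ h < 0 := by
      have h9 : (0:ℝ) ≤ l (.inr ()) := hl (.inr ()); linarith [hcost]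
    have hhpos : ∀ i, x i = 0 → 0 ≤ h i := by
      intro i hxi
      have h9 : (0:ℝ) ≤ l (.inl (.inl i)) := hl (.inl (.inl i))
      simpa [hh, hxi] using h9
    -- choose step size
    set T : Finset (Fin n) := Finset.univ.filter (fun i => h i < 0) with hT
    have hxposT : ∀ i ∈ T, 0 < x i := by
      intro i hi
      simp only [hT, Finset.mem_filter, Finset.mem_univ, true_and] at hi
      rcases eq_or_lt_of_le (hxpos i) with h' | h'
      · exact absurd (hhpos i h'.symm) (not_le.mpr hi)
      · exact h'
    obtain ⟨ε, hε0, hεle⟩ : ∃ ε : ℝ, 0 < ε ∧ ∀ i ∈ T, x i + ε * h i ≥ 0 := by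
      rcases T.eq_empty_or_nonempty with hTe | hTne
      · exact ⟨1, one_pos, fun i hi => by simp [hTe] at hi⟩
      · obtain ⟨i0, hi0T, hi0min⟩ := T.exists_min_image (fun i => x i / (-h i)) hTne
        have hhi0 : h i0 < 0 := by
          simpa [hT] using hi0T
        refine ⟨x i0 / (-h i0), div_pos (hxposT i0 hi0T) (by linarith), ?_⟩
        intro i hi
        have hhi : h i < 0 := by simpa [hT] using hi
        have hle := hi0min i hi
        have h1 : x i0 / (-h i0) * (-h i) ≤ x i / (-h i) * (-h i) :=
          mul_le_mul_of_nonneg_right hle (by linarith)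
        rw [div_mul_cancel₀ _ (by linarith : -h i ≠ 0)] at h1
        nlinarith
    have hfeas' : A *ᵥ (x + ε • h) = A *ᵥ d := by
      rw [Matrix.mulVec_add, Matrix.mulVec_smul, hAh, hfeas]; simp
    have hpos' : 0 ≤ x + ε • h := by
      intro i
      by_cases hi : h i < 0
      · have := hεle i (by simp [hT, hi])
        simpa using this
      · push_neg at hi
        have : 0 ≤ ε * h i := mul_nonneg hε0.le hi
        have := add_nonneg (hxpos i) this
        simpa using this
    have := hopt _ hfeas' hpos'
    rw [dotProduct_add, dotProduct_smul, smul_eq_mul] at this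
    nlinarith [this, hcost', mul_neg_of_pos_of_neg hε0 hcost']
  · obtain ⟨w, hwV, hwb⟩ := coneOf_farkas V b hmem
    have hw0 : 0 < w 0 := by
      rw [hb, cons_dot] at hwb
      simp at hwb
      linarith
    refine ⟨fun j => -(w j.succ) / w 0, ?_, ?_⟩
    · intro i
      have := hwV (.inl (.inl i))
      rw [show V (.inl (.inl i)) = uvec i from rfl, huvec, cons_dot] at this
      have hAt : (Aᵀ *ᵥ fun j => -(w j.succ) / w 0) i
          = (-(∑ j, A j i * w j.succ)) / w 0 := by
        simp only [Matrix.mulVec, dotProduct, Matrix.transpose_apply]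
        rw [← Finset.sum_neg_distrib, Finset.sum_div]
        exact Finset.sum_congr rfl fun j _ => by ring
      rw [hAt, div_le_iff₀ hw0]
      linarith
    · intro i hxi
      have h1 := hwV (.inl (.inl i))
      have h2 := hwV (.inl (.inr i))
      rw [show V (.inl (.inr i)) = if x i = 0 then 0 else -uvec i from rfl, if_neg hxi] at h2
      rw [show V (.inl (.inl i)) = uvec i from rfl, huvec, cons_dot] at h1
      have h2' : (uvec i) ⬝ᵥ w ≤ 0 := by
        have : (-uvec i) ⬝ᵥ w = -((uvec i) ⬝ᵥ w) := by
          simp [dotProduct]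
        rw [this] at h2
        linarith
      rw [huvec, cons_dot] at h2'
      have heq : cost i * w 0 + ∑ j, A j i * w j.succ = 0 := le_antisymm h2' h1
      have hAt : (Aᵀ *ᵥ fun j => -(w j.succ) / w 0) i
          = (-(∑ j, A j i * w j.succ)) / w 0 := by
        simp only [Matrix.mulVec, dotProduct, Matrix.transpose_apply]
        rw [← Finset.sum_neg_distrib, Finset.sum_div]
        exact Finset.sum_congr rfl fun j _ => by ring
      rw [hAt]
      have hs : ∑ j, A j i * w j.succ = -(cost i * w 0) := by linarith
      rw [hs, neg_neg, mul_div_assoc, div_self hw0.ne', mul_one]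


lemma mulVec_entry {a b : ℕ} (M : Matrix (Fin a) (Fin b) ℝ) (w : Fin b → ℝ) (j : Fin a) :
    (M *ᵥ w) j = (Mᵀ *ᵥ Pi.single j 1) ⬝ᵥ w := by
  simp [Matrix.mulVec, dotProduct, Matrix.transpose_apply, Pi.single_apply]

lemma decomp_general {n m' l' : ℕ} {Mv : Fin n → ℝ}
    (C : Matrix (Fin m') (Fin n) ℝ) (D : Matrix (Fin l') (Fin n) ℝ)
    (h1 : ∀ wa wb, (Cᵀ *ᵥ wa) ⬝ᵥ (Dᵀ *ᵥ wb) = 0)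
    (h2 : ∀ wa, (Cᵀ *ᵥ wa) ⬝ᵥ Mv = 0)
    (h3 : ∀ wb, (Dᵀ *ᵥ wb) ⬝ᵥ Mv = 0)
    (h4 : LinearMap.range (Cᵀ).mulVecLin ⊔ LinearMap.range (Dᵀ).mulVecLin ⊔
      Submodule.span ℝ {Mv} = ⊤)
    (hA2 : Mv ⬝ᵥ Mv = 1) (P : Fin n → ℝ) (hP : C *ᵥ P = 0) :
    ∃ q : Fin l' → ℝ, P = Dᵀ *ᵥ q + (Mv ⬝ᵥ P) • Mv := by
  have hPtop : P ∈ (⊤ : Submodule ℝ (Fin n → ℝ)) := trivial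
  rw [← h4] at hPtop
  rcases Submodule.mem_sup.mp hPtop with ⟨y, hy, z, hz, hyz⟩
  rcases Submodule.mem_sup.mp hy with ⟨ya, hya, yb, hyb, hyy⟩
  obtain ⟨a, ha⟩ := LinearMap.mem_range.mp hya
  obtain ⟨q, hq⟩ := LinearMap.mem_range.mp hyb
  obtain ⟨α, hα⟩ := Submodule.mem_span_singleton.mp hz
  rw [Matrix.mulVecLin_apply] at ha hq
  have hPdec : P = Cᵀ *ᵥ a + Dᵀ *ᵥ q + α • Mv := by
    rw [← hyz, ← hyy, ← ha, ← hq, ← hα]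
  -- show Cᵀ *ᵥ a = 0
  have hCD : C *ᵥ (Dᵀ *ᵥ q) = 0 := by
    funext j; rw [mulVec_entry]; exact h1 _ _
  have hCM : C *ᵥ Mv = 0 := by
    funext j; rw [mulVec_entry]; exact h2 _
  have hCC : C *ᵥ (Cᵀ *ᵥ a) = 0 := by
    have := hP
    rw [hPdec, Matrix.mulVec_add, Matrix.mulVec_add, Matrix.mulVec_smul, hCD, hCM] at this
    simpa using this
  have hCa : Cᵀ *ᵥ a = 0 := by
    have hdot : (Cᵀ *ᵥ a) ⬝ᵥ (Cᵀ *ᵥ a) = 0 := by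
      rw [Matrix.dotProduct_mulVec, Matrix.vecMul_transpose, hCC, zero_dotProduct]
    exact dotProduct_self_eq_zero.mp hdot
  have hPdec2 : P = Dᵀ *ᵥ q + α • Mv := by
    rw [hPdec, hCa]; simp
  have hMvP : Mv ⬝ᵥ P = α := by
    rw [hPdec2, dotProduct_add, dotProduct_smul, smul_eq_mul,
      dotProduct_comm Mv, hA2, h3, mul_one, zero_add]
  exact ⟨q, by rw [hMvP]; exact hPdec2⟩

lemma pairing {n m l : ℕ} {Mv : Fin n → ℝ}
    (A : Matrix (Fin m) (Fin n) ℝ) (B : Matrix (Fin l) (Fin n) ℝ)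
    (h1 : ∀ wa wb, (Aᵀ *ᵥ wa) ⬝ᵥ (Bᵀ *ᵥ wb) = 0)
    (h2 : ∀ wa, (Aᵀ *ᵥ wa) ⬝ᵥ Mv = 0)
    (h3 : ∀ wb, (Bᵀ *ᵥ wb) ⬝ᵥ Mv = 0)
    (h4 : LinearMap.range (Aᵀ).mulVecLin ⊔ LinearMap.range (Bᵀ).mulVecLin ⊔
      Submodule.span ℝ {Mv} = ⊤)
    (hA2 : Mv ⬝ᵥ Mv = 1) (P Q : Fin n → ℝ) (hP : A *ᵥ P = 0) (hQ : B *ᵥ Q = 0) :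
    P ⬝ᵥ Q = (Mv ⬝ᵥ P) * (Mv ⬝ᵥ Q) := by
  obtain ⟨q, hq⟩ := decomp_general A B h1 h2 h3 h4 hA2 P hP
  have h4' : LinearMap.range (Bᵀ).mulVecLin ⊔ LinearMap.range (Aᵀ).mulVecLin ⊔
      Submodule.span ℝ {Mv} = ⊤ := by
    rw [sup_comm (LinearMap.range (Bᵀ).mulVecLin)]; exact h4
  obtain ⟨p, hp⟩ := decomp_general B A
    (fun wb wa => by rw [dotProduct_comm]; exact h1 wa wb) h3 h2 h4' hA2 Q hQ
  calc P ⬝ᵥ Q = (Bᵀ *ᵥ q + (Mv ⬝ᵥ P) • Mv) ⬝ᵥ (Aᵀ *ᵥ p + (Mv ⬝ᵥ Q) • Mv) := by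
        rw [← hq, ← hp]
    _ = (Mv ⬝ᵥ P) * (Mv ⬝ᵥ Q) := by
        rw [add_dotProduct, dotProduct_add, dotProduct_add,
          smul_dotProduct, smul_dotProduct, dotProduct_smul,
          dotProduct_smul]
        rw [dotProduct_comm (Bᵀ *ᵥ q) (Aᵀ *ᵥ p), h1, h3]
        have h2' : Mv ⬝ᵥ (Aᵀ *ᵥ p) = 0 := by rw [dotProduct_comm]; exact h2 p
        rw [h2', hA2]
        simp [smul_eq_mul]


end PsiAux

/-- If `Φ(u) = [v̲, v̄]` with `v̲ < v̄`, then `Ψ(v) = {u}` for every `v` in the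
open interval `(v̲, v̄)`. -/
theorem Psi_singleton_on_interior {m l n : ℕ}
    (A : Matrix (Fin m) (Fin n) ℝ) (B : Matrix (Fin l) (Fin n) ℝ)
    (Mv c d : Fin n → ℝ) (hd : 0 ≤ d) (hc : 0 ≤ c)
    (hA1 : Assumption1R A B Mv) (hA2 : Mv ⬝ᵥ Mv = 1)
    (u : ℝ) (hu : u ∈ ThetaDR B Mv c) (vlo vhi : ℝ) (hlt : vlo < vhi)
    (hPhi : PhiR A Mv c d u = Set.Icc vlo vhi) :
    ∀ v ∈ Set.Ioo vlo vhi, PsiR B Mv c d v = {u} := by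
  classical
  open PsiAux in
  obtain ⟨h1, h2, h3, h4⟩ := hA1
  have hAMv : A *ᵥ Mv = 0 := funext fun j => by
    rw [mulVec_entry]; exact h2 _
  have hBMv : B *ᵥ Mv = 0 := funext fun j => by
    rw [mulVec_entry]; exact h3 _
  have hABt : ∀ q, A *ᵥ (Bᵀ *ᵥ q) = 0 := fun q => funext fun j => by
    rw [mulVec_entry]; exact h1 _ _
  have hBAt : ∀ p, B *ᵥ (Aᵀ *ᵥ p) = 0 := fun p => funext fun j => by
    rw [mulVec_entry, dotProduct_comm]; exact h1 _ _
  have pair : ∀ P Q : Fin n → ℝ, A *ᵥ P = 0 → B *ᵥ Q = 0 →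
      P ⬝ᵥ Q = (Mv ⬝ᵥ P) * (Mv ⬝ᵥ Q) := fun P Q hP hQ =>
    pairing A B h1 h2 h3 h4 hA2 P Q hP hQ
  intro v hv
  have hvmem : v ∈ PhiR A Mv c d u := by rw [hPhi]; exact Set.mem_Icc_of_Ioo hv
  obtain ⟨x, hxopt, hxv⟩ := hvmem
  have hlo : vlo ∈ PhiR A Mv c d u := by
    rw [hPhi]; exact Set.mem_Icc.mpr ⟨le_refl _, hlt.le⟩
  obtain ⟨x1, hx1opt, hx1v⟩ := hlo
  have hhi : vhi ∈ PhiR A Mv c d u := by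
    rw [hPhi]; exact Set.mem_Icc.mpr ⟨hlt.le, le_refl _⟩
  obtain ⟨x2, hx2opt, hx2v⟩ := hhi
  have hMx : Mv ⬝ᵥ x = Mv ⬝ᵥ d + v := by
    rw [dotProduct_sub] at hxv; linarith
  have hMx1 : Mv ⬝ᵥ x1 = Mv ⬝ᵥ d + vlo := by
    rw [dotProduct_sub] at hx1v; linarith
  have hMx2 : Mv ⬝ᵥ x2 = Mv ⬝ᵥ d + vhi := by
    rw [dotProduct_sub] at hx2v; linarith
  apply Set.eq_singleton_iff_unique_mem.mpr
  constructor
  · -- u ∈ Ψ(v)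
    obtain ⟨p, hple, hpeq⟩ := exists_dual_certificate A d (c + u • Mv) x hxopt
    set y : Fin n → ℝ := c + u • Mv - Aᵀ *ᵥ p with hy
    have hy0 : 0 ≤ y := by
      intro i
      have := hple i
      simp only [hy, Pi.zero_apply, Pi.sub_apply, Pi.add_apply, Pi.smul_apply, smul_eq_mul]
      simp only [Pi.add_apply, Pi.smul_apply, smul_eq_mul] at this
      linarith
    have hxy : x ⬝ᵥ y = 0 := by
      have hterm : ∀ i, x i * y i = 0 := by
        intro i
        rcases eq_or_ne (x i) 0 with h | h
        · simp [h]
        · have := hpeq i h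
          have hyi : y i = 0 := by
            simp only [hy, Pi.sub_apply, Pi.add_apply, Pi.smul_apply, smul_eq_mul]
            simp only [Pi.add_apply, Pi.smul_apply, smul_eq_mul] at this
            linarith
          simp [hyi]
      simpa [dotProduct] using Finset.sum_eq_zero (fun i _ => hterm i)
    have hyfeas : B *ᵥ y = B *ᵥ c := by
      rw [hy, Matrix.mulVec_sub, Matrix.mulVec_add, Matrix.mulVec_smul, hBMv, hBAt]
      simp
    have huval : Mv ⬝ᵥ (y - c) = u := by
      have hyc : y - c = u • Mv - Aᵀ *ᵥ p := by rw [hy]; abel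
      have hMvAt : Mv ⬝ᵥ (Aᵀ *ᵥ p) = 0 := by
        rw [dotProduct_comm]; exact h2 p
      rw [hyc, dotProduct_sub, dotProduct_smul, smul_eq_mul, hA2, hMvAt]
      ring
    have key : ∀ w : Fin n → ℝ, B *ᵥ w = B *ᵥ c →
        (d + v • Mv) ⬝ᵥ w = x ⬝ᵥ w + (v * (Mv ⬝ᵥ c) - x ⬝ᵥ c + d ⬝ᵥ c) := by
      intro w hw
      have hpair := pair (x - d) (w - c)
        (by rw [Matrix.mulVec_sub, hxopt.1, sub_self])
        (by rw [Matrix.mulVec_sub, hw, sub_self])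
      rw [sub_dotProduct, dotProduct_sub, dotProduct_sub,
        dotProduct_sub, dotProduct_sub] at hpair
      rw [add_dotProduct, smul_dotProduct, smul_eq_mul]
      rw [hMx] at hpair
      linear_combination -hpair
    refine ⟨y, ⟨⟨hyfeas, hy0, ?_⟩, huval.symm⟩⟩
    intro y' hfeas' hpos'
    rw [key y hyfeas, key y' hfeas']
    have hnn : 0 ≤ x ⬝ᵥ y' :=
      Finset.sum_nonneg fun i _ => mul_nonneg (hxopt.2.1 i) (hpos' i)
    linarith [hxy, hnn]
  · -- uniqueness
    intro u' hu'
    obtain ⟨y', hy'opt, hu'val⟩ := hu'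
    have hMy' : Mv ⬝ᵥ y' = Mv ⬝ᵥ c + u' := by
      rw [dotProduct_sub] at hu'val; linarith
    obtain ⟨q, hqle, hqeq⟩ := exists_dual_certificate B c (d + v • Mv) y' hy'opt
    set x' : Fin n → ℝ := d + v • Mv - Bᵀ *ᵥ q with hx'
    have hx'0 : 0 ≤ x' := by
      intro i
      have := hqle i
      simp only [hx', Pi.zero_apply, Pi.sub_apply, Pi.add_apply, Pi.smul_apply, smul_eq_mul]
      simp only [Pi.add_apply, Pi.smul_apply, smul_eq_mul] at this
      linarith
    have hx'y' : y' ⬝ᵥ x' = 0 := by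
      have hterm : ∀ i, y' i * x' i = 0 := by
        intro i
        rcases eq_or_ne (y' i) 0 with h | h
        · simp [h]
        · have := hqeq i h
          have hxi : x' i = 0 := by
            simp only [hx', Pi.sub_apply, Pi.add_apply, Pi.smul_apply, smul_eq_mul]
            simp only [Pi.add_apply, Pi.smul_apply, smul_eq_mul] at this
            linarith
          simp [hxi]
      simpa [dotProduct] using Finset.sum_eq_zero (fun i _ => hterm i)
    have hx'feas : A *ᵥ x' = A *ᵥ d := by
      rw [hx', Matrix.mulVec_sub, Matrix.mulVec_add, Matrix.mulVec_smul, hAMv, hABt]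
      simp
    have hMx' : Mv ⬝ᵥ x' = Mv ⬝ᵥ d + v := by
      have hMvBt : Mv ⬝ᵥ (Bᵀ *ᵥ q) = 0 := by
        rw [dotProduct_comm]; exact h3 q
      rw [hx', dotProduct_sub, dotProduct_add, dotProduct_smul,
        smul_eq_mul, hA2, hMvBt]
      ring
    -- x' is optimal for the cost c + u' • Mv
    have key2 : ∀ w : Fin n → ℝ, A *ᵥ w = A *ᵥ d →
        (c + u' • Mv) ⬝ᵥ w = w ⬝ᵥ y' +
          (u' * (Mv ⬝ᵥ d) + d ⬝ᵥ c - d ⬝ᵥ y' + (c ⬝ᵥ w - w ⬝ᵥ c)) := by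
      intro w hw
      have hpair := pair (w - d) (y' - c)
        (by rw [Matrix.mulVec_sub, hw, sub_self])
        (by rw [Matrix.mulVec_sub, hy'opt.1, sub_self])
      rw [show Mv ⬝ᵥ (y' - c) = u' from hu'val.symm] at hpair
      rw [sub_dotProduct, dotProduct_sub, dotProduct_sub,
        dotProduct_sub] at hpair
      rw [add_dotProduct, smul_dotProduct, smul_eq_mul]
      linear_combination -hpair
    have hx'opt : ∀ w : Fin n → ℝ, A *ᵥ w = A *ᵥ d → 0 ≤ w →
        (c + u' • Mv) ⬝ᵥ x' ≤ (c + u' • Mv) ⬝ᵥ w := by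
      intro w hw hw0
      rw [key2 x' hx'feas, key2 w hw]
      have hnn : 0 ≤ w ⬝ᵥ y' :=
        Finset.sum_nonneg fun i _ => mul_nonneg (hw0 i) (hy'opt.2.1 i)
      have hz : x' ⬝ᵥ y' = 0 := by rw [dotProduct_comm]; exact hx'y'
      have hcomm1 : x' ⬝ᵥ c = c ⬝ᵥ x' := dotProduct_comm _ _
      have hcomm2 : w ⬝ᵥ c = c ⬝ᵥ w := dotProduct_comm _ _
      linarith
    -- cross inequalities with x1 and x2
    have i1 := hx'opt x1 hx1opt.1 hx1opt.2.1
    have i2 := hx1opt.2.2 x' hx'feas hx'0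
    have i3 := hx'opt x2 hx2opt.1 hx2opt.2.1
    have i4 := hx2opt.2.2 x' hx'feas hx'0
    simp only [add_dotProduct, smul_dotProduct, smul_eq_mul] at i1 i2 i3 i4
    rw [hMx', hMx1] at i1 i2
    rw [hMx', hMx2] at i3 i4
    have hle1 : (u' - u) * (v - vlo) ≤ 0 := by nlinarith [i1, i2]
    have hle2 : (u - u') * (vhi - v) ≤ 0 := by nlinarith [i3, i4]
    have hvlo : 0 < v - vlo := by have := hv.1; linarith
    have hvhi : 0 < vhi - v := by have := hv.2; linarith
    have hua : u' ≤ u := by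
      by_contra hc
      push_neg at hc
      have := mul_pos (sub_pos.mpr hc) hvlo
      linarith
    have hub : u ≤ u' := by
      by_contra hc
      push_neg at hc
      have := mul_pos (sub_pos.mpr hc) hvhi
      linarith
    linarith
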